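/- Let C be a v×v real symmetric positive semidefinite matrix, let W be a v×v real symmetric positive semidefinite matrix of rank d whose column space is contained in the column space of C, let K be a v×d real matrix of rank d with K Kᵀ = W, and let W^{1/2} denote the positive semidefinite square root of W. Then the d×d matrix M = (Kᵀ C⁺ K)^{−1} and the v×v matrix N = (W^{1/2} C⁺ W^{1/2})⁺ have the same nonzero eigenvalues including multiplicities; that is, for every real λ ≠ 0, the dimension of the kernel of M − λ·I_d equals the dimension of the kernel of N − λ·I_v. -/

import Mathlib

open Matrix

/-- The column space of a real matrix. -/
def colSpace {m n : ℕ} (A : Matrix (Fin m) (Fin n) ℝ) : Submodule ℝ (Fin m → ℝ) :=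
  LinearMap.range A.mulVecLin

/-- `B` is the Moore–Penrose pseudoinverse of `A`. -/
def IsMPInv {m n : ℕ} (A : Matrix (Fin m) (Fin n) ℝ) (B : Matrix (Fin n) (Fin m) ℝ) : Prop :=
  A * B * A = A ∧ B * A * B = B ∧ (A * B)ᵀ = A * B ∧ (B * A)ᵀ = B * A

/-!
Since `K` has full column rank and `Wsq Wsqᵀ = W = K Kᵀ`, we can write `Wsq = K Z` with
`Z = (Kᵀ K)⁻¹ Kᵀ Wsq`, whose rows are orthonormal (`Z Zᵀ = 1`). Then
`Wsq C⁺ Wsq = Zᵀ (Kᵀ C⁺ K) Z`, and since `Kᵀ C⁺ K` is invertible, conjugating the Penrose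
equations by `Z` gives `N = Zᵀ M Z` with `M = (Kᵀ C⁺ K)⁻¹`. Finally `M = Z (Zᵀ M)` and
`N = (Zᵀ M) Z`, and `PQ`, `QP` have the same nonzero eigenvalues with the same geometric
multiplicities.
-/

namespace Matrix

section Eigenspaces

variable {K : Type*} [Field K] {m n : Type*} [Fintype m] [Fintype n] [DecidableEq m]
  [DecidableEq n]

lemma mem_ker_sub_smul_one_iff (A : Matrix n n K) (μ : K) (x : n → K) :
    x ∈ LinearMap.ker (A - μ • 1).mulVecLin ↔ A *ᵥ x = μ • x := by
  simp only [LinearMap.mem_ker, mulVecLin_apply, sub_mulVec, smul_mulVec, one_mulVec,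
    sub_eq_zero]

lemma finrank_ker_mul_sub_smul_le (P : Matrix m n K) (Q : Matrix n m K) {μ : K} (hμ : μ ≠ 0) :
    Module.finrank K (LinearMap.ker (P * Q - μ • 1).mulVecLin) ≤
      Module.finrank K (LinearMap.ker (Q * P - μ • 1).mulVecLin) := by
  have hmaps : ∀ x ∈ LinearMap.ker (P * Q - μ • 1).mulVecLin,
      Q.mulVecLin x ∈ LinearMap.ker (Q * P - μ • 1).mulVecLin := by
    intro x hx
    rw [mem_ker_sub_smul_one_iff] at hx ⊢
    rw [mulVecLin_apply, ← mulVec_mulVec, mulVec_mulVec _ P Q, hx, mulVec_smul]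
  refine LinearMap.finrank_le_finrank_of_injective (f := Q.mulVecLin.restrict hmaps) ?_
  rintro ⟨x, hx⟩ ⟨y, hy⟩ hxy
  rw [mem_ker_sub_smul_one_iff] at hx hy
  have hQ : Q *ᵥ x = Q *ᵥ y := congrArg Subtype.val hxy
  have : μ • x = μ • y := by rw [← hx, ← hy, ← mulVec_mulVec, ← mulVec_mulVec, hQ]
  exact Subtype.ext (smul_right_injective _ hμ this)

theorem finrank_ker_mul_sub_smul_comm (P : Matrix m n K) (Q : Matrix n m K) {μ : K}
    (hμ : μ ≠ 0) :
    Module.finrank K (LinearMap.ker (P * Q - μ • 1).mulVecLin) =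
      Module.finrank K (LinearMap.ker (Q * P - μ • 1).mulVecLin) :=
  le_antisymm (finrank_ker_mul_sub_smul_le P Q hμ) (finrank_ker_mul_sub_smul_le Q P hμ)

end Eigenspaces

lemma mulVec_injective_of_rank_eq_card {K m n : Type*} [Field K] [Fintype n] (A : Matrix m n K)
    (h : A.rank = Fintype.card n) : Function.Injective A.mulVec := by
  have hker : Module.finrank K (LinearMap.ker A.mulVecLin) = 0 := by
    have := LinearMap.finrank_range_add_finrank_ker A.mulVecLin
    rw [← rank, h, Module.finrank_fintype_fun_eq_card] at this
    omega
  rw [Submodule.finrank_eq_zero, ker_mulVecLin_eq_bot_iff] at hker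
  exact (injective_iff_map_eq_zero A.mulVecLin).mpr hker

section Real

variable {m n : Type*} [Fintype m] [Fintype n] [DecidableEq n]

lemma isUnit_transpose_mul_self_of_injective (A : Matrix m n ℝ)
    (h : Function.Injective A.mulVec) : IsUnit (Aᵀ * A) := by
  rw [← mulVec_injective_iff_isUnit]
  have hker : LinearMap.ker (Aᵀ * A).mulVecLin = ⊥ := by
    rw [ker_mulVecLin_transpose_mul_self]
    exact LinearMap.ker_eq_bot.mpr h
  exact LinearMap.ker_eq_bot.mp hker

lemma exists_mul_eq_of_mul_transpose_eq {k : Type*} [Fintype k] (Y : Matrix m n ℝ)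
    (X : Matrix m k ℝ) (hY : IsUnit (Yᵀ * Y)) (h : X * Xᵀ = Y * Yᵀ) :
    ∃ Z : Matrix n k ℝ, Z * Zᵀ = 1 ∧ Y * Z = X := by
  have hdet := (isUnit_iff_isUnit_det _).mp hY
  set G := (Yᵀ * Y)⁻¹
  have hGsymm : Gᵀ = G := by rw [transpose_nonsing_inv, transpose_mul, transpose_transpose]
  have hYG : Y * G * (Yᵀ * Y) = Y := by
    rw [Matrix.mul_assoc, nonsing_inv_mul _ hdet, Matrix.mul_one]
  set Z := G * Yᵀ * X
  have hZZ : Z * Zᵀ = 1 :=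
    calc Z * Zᵀ = G * Yᵀ * (X * Xᵀ) * Y * G := by
          simp only [Z, transpose_mul, transpose_transpose, hGsymm, Matrix.mul_assoc]
      _ = G * (Yᵀ * Y) * ((Yᵀ * Y) * G) := by rw [h]; simp only [Matrix.mul_assoc]
      _ = 1 := by rw [nonsing_inv_mul _ hdet, mul_nonsing_inv _ hdet, Matrix.mul_one]
  have hYZX : Y * Z * Xᵀ = Y * Yᵀ := by
    rw [Matrix.mul_assoc, Matrix.mul_assoc, Matrix.mul_assoc, h, ← Matrix.mul_assoc Yᵀ,
      ← Matrix.mul_assoc, ← Matrix.mul_assoc, hYG]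
  have hXZY : X * (Y * Z)ᵀ = Y * Yᵀ := by
    rw [← transpose_transpose X, ← transpose_mul, hYZX, transpose_mul,
      transpose_transpose]
  have hYZZY : Y * Z * (Y * Z)ᵀ = Y * Yᵀ := by
    rw [transpose_mul, Matrix.mul_assoc, ← Matrix.mul_assoc Z, hZZ, Matrix.one_mul]
  have hD : (X - Y * Z) * (X - Y * Z)ᵀ = 0 := by
    simp only [transpose_sub, Matrix.sub_mul, Matrix.mul_sub, h, hYZX, hXZY, hYZZY]
    abel
  have hD0 : X - Y * Z = 0 :=
    self_mul_conjTranspose_eq_zero.mp (by rwa [conjTranspose_eq_transpose_of_trivial])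
  exact ⟨Z, hZZ, (sub_eq_zero.mp hD0).symm⟩

end Real

lemma transpose_mul_mul_mul_of_mul_transpose {R : Type*} [CommRing R]
    {l m n p q r : Type*} [Fintype l] [Fintype m] [Fintype n] [Fintype q] [DecidableEq n]
    {U : Matrix m p R} {V : Matrix n q R} {W : Matrix l r R} (hV : V * Vᵀ = 1)
    (X : Matrix m n R) (Y : Matrix n l R) :
    Uᵀ * X * V * (Vᵀ * Y * W) = Uᵀ * (X * Y) * W :=
  calc Uᵀ * X * V * (Vᵀ * Y * W) = Uᵀ * X * (V * Vᵀ) * Y * W := by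
        simp only [Matrix.mul_assoc]
    _ = Uᵀ * (X * Y) * W := by rw [hV, Matrix.mul_one, Matrix.mul_assoc Uᵀ]

end Matrix

lemma colSpace_mul_transpose_self {m n : ℕ} (A : Matrix (Fin m) (Fin n) ℝ) :
    colSpace (A * Aᵀ) = colSpace A := by
  refine Submodule.eq_of_le_of_finrank_eq ?_ (rank_self_mul_transpose A)
  rw [colSpace, colSpace, mulVecLin_mul]
  exact LinearMap.range_comp_le_range _ _

namespace IsMPInv

variable {m n : ℕ} {A : Matrix (Fin m) (Fin n) ℝ} {B : Matrix (Fin n) (Fin m) ℝ}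

theorem unique {B' : Matrix (Fin n) (Fin m) ℝ} (h : IsMPInv A B) (h' : IsMPInv A B') :
    B = B' := by
  obtain ⟨hABA, hBAB, hAB, hBA⟩ := h
  obtain ⟨hABA', hBAB', hAB', hBA'⟩ := h'
  have hA_B : A * B = A * B' :=
    calc A * B = A * B' * A * B := by rw [hABA']
      _ = (A * B')ᵀ * (A * B)ᵀ := by rw [hAB, hAB', Matrix.mul_assoc (A * B')]
      _ = (A * B * A * B')ᵀ := by rw [← transpose_mul, Matrix.mul_assoc (A * B)]
      _ = A * B' := by rw [hABA, hAB']
  have hB_A : B * A = B' * A :=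
    calc B * A = B * (A * B' * A) := by rw [hABA']
      _ = (B * A)ᵀ * (B' * A)ᵀ := by rw [hBA, hBA']; simp only [Matrix.mul_assoc]
      _ = (B' * (A * B * A))ᵀ := by rw [← transpose_mul]; simp only [Matrix.mul_assoc]
      _ = B' * A := by rw [hABA, hBA']
  calc B = B * A * B := hBAB.symm
    _ = B' * (A * B') := by rw [hB_A, Matrix.mul_assoc, hA_B]
    _ = B' := by rw [← Matrix.mul_assoc, hBAB']

theorem nonsing_inv {A : Matrix (Fin n) (Fin n) ℝ} (hA : IsUnit A) : IsMPInv A A⁻¹ := by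
  have hdet := (isUnit_iff_isUnit_det A).mp hA
  simp only [IsMPInv, mul_nonsing_inv _ hdet, nonsing_inv_mul _ hdet, Matrix.one_mul,
    transpose_one, and_self]

theorem transpose_mul_mul {p q : ℕ} (h : IsMPInv A B) {U : Matrix (Fin m) (Fin p) ℝ}
    {V : Matrix (Fin n) (Fin q) ℝ} (hU : U * Uᵀ = 1) (hV : V * Vᵀ = 1) :
    IsMPInv (Uᵀ * A * V) (Vᵀ * B * U) := by
  obtain ⟨hABA, hBAB, hAB, hBA⟩ := h
  refine ⟨?_, ?_, ?_, ?_⟩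
  · rw [Matrix.transpose_mul_mul_mul_of_mul_transpose hV,
      Matrix.transpose_mul_mul_mul_of_mul_transpose hU, hABA]
  · rw [Matrix.transpose_mul_mul_mul_of_mul_transpose hU,
      Matrix.transpose_mul_mul_mul_of_mul_transpose hV, hBAB]
  · rw [Matrix.transpose_mul_mul_mul_of_mul_transpose hV, transpose_mul, transpose_mul,
      transpose_transpose, hAB, ← Matrix.mul_assoc]
  · rw [Matrix.transpose_mul_mul_mul_of_mul_transpose hU, transpose_mul, transpose_mul,
      transpose_transpose, hBA, ← Matrix.mul_assoc]

/-- On `C(C)` the form `y ↦ yᵀ C⁺ y` is `C z ↦ zᵀ C z`, which vanishes only where `C z = 0`. -/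
theorem isUnit_transpose_mul_mul {C Cp : Matrix (Fin n) (Fin n) ℝ} (hC : C.PosSemidef)
    (hCp : IsMPInv C Cp) {K : Matrix (Fin n) (Fin m) ℝ} (hK : Function.Injective K.mulVec)
    (hcol : colSpace K ≤ colSpace C) : IsUnit (Kᵀ * Cp * K) := by
  refine mulVec_injective_iff_isUnit.mp <|
    (injective_iff_map_eq_zero (Kᵀ * Cp * K).mulVecLin).mpr fun x hx ↦ ?_
  rw [mulVecLin_apply] at hx
  obtain ⟨z, hz⟩ := hcol (LinearMap.mem_range_self K.mulVecLin x)
  rw [mulVecLin_apply, mulVecLin_apply] at hz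
  have hCsymm : Cᵀ = C := by simpa using hC.isHermitian.eq
  have hform : x ⬝ᵥ (Kᵀ * Cp * K) *ᵥ x = z ⬝ᵥ C *ᵥ z :=
    calc x ⬝ᵥ (Kᵀ * Cp * K) *ᵥ x = (K *ᵥ x) ⬝ᵥ Cp *ᵥ K *ᵥ x := by
          rw [← mulVec_mulVec, ← mulVec_mulVec, dotProduct_mulVec, vecMul_transpose]
      _ = z ⬝ᵥ (C * Cp * C) *ᵥ z := by
          rw [← hz, ← mulVec_mulVec, ← mulVec_mulVec, dotProduct_mulVec z, ← mulVec_transpose,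
            hCsymm]
      _ = z ⬝ᵥ C *ᵥ z := by rw [hCp.1]
  have hCz : C *ᵥ z = 0 := by
    rw [← hC.dotProduct_mulVec_zero_iff, star_trivial, ← hform, hx, dotProduct_zero]
  exact hK (by rw [← hz, hCz, mulVec_zero])

end IsMPInv

theorem stmt6_general (v d : ℕ) (C W : Matrix (Fin v) (Fin v) ℝ) (hC : C.PosSemidef)
    (hcol : colSpace W ≤ colSpace C)
    (K : Matrix (Fin v) (Fin d) ℝ) (hKrank : K.rank = d) (hKW : K * Kᵀ = W)
    (Wsq : Matrix (Fin v) (Fin v) ℝ) (hWsq : Wsq.PosSemidef) (hWsqW : Wsq * Wsq = W)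
    (Cp : Matrix (Fin v) (Fin v) ℝ) (hCp : IsMPInv C Cp)
    (N : Matrix (Fin v) (Fin v) ℝ) (hN : IsMPInv (Wsq * Cp * Wsq) N) :
    ∀ μ : ℝ, μ ≠ 0 →
      Module.finrank ℝ (LinearMap.ker (((Kᵀ * Cp * K)⁻¹ - μ • 1).mulVecLin)) =
        Module.finrank ℝ (LinearMap.ker ((N - μ • 1).mulVecLin)) := by
  intro μ hμ
  have hWsqT : Wsqᵀ = Wsq := by simpa using hWsq.isHermitian.eq
  have hK : Function.Injective K.mulVec :=
    K.mulVec_injective_of_rank_eq_card (by rw [hKrank, Fintype.card_fin])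
  obtain ⟨Z, hZZ, hKZ⟩ := K.exists_mul_eq_of_mul_transpose_eq Wsq
    (K.isUnit_transpose_mul_self_of_injective hK) (by rw [hWsqT, hWsqW, hKW])
  have hA : IsUnit (Kᵀ * Cp * K) :=
    IsMPInv.isUnit_transpose_mul_mul hC hCp hK (by rwa [← colSpace_mul_transpose_self, hKW])
  have hB : Wsq * Cp * Wsq = Zᵀ * (Kᵀ * Cp * K) * Z := by
    have hZK : Zᵀ * Kᵀ = Wsq := by rw [← transpose_mul, hKZ, hWsqT]
    simp only [← Matrix.mul_assoc, hZK]
    rw [Matrix.mul_assoc _ K Z, hKZ]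
  have hNZ : N = Zᵀ * (Kᵀ * Cp * K)⁻¹ * Z :=
    (hB ▸ hN).unique ((IsMPInv.nonsing_inv hA).transpose_mul_mul hZZ hZZ)
  have h := Matrix.finrank_ker_mul_sub_smul_comm Z (Zᵀ * (Kᵀ * Cp * K)⁻¹) hμ
  rwa [← Matrix.mul_assoc, hZZ, Matrix.one_mul, ← hNZ] at h

theorem stmt6 (v d : ℕ) (C W : Matrix (Fin v) (Fin v) ℝ) (hC : C.PosSemidef) (hW : W.PosSemidef)
    (hWrank : W.rank = d) (hcol : colSpace W ≤ colSpace C)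
    (K : Matrix (Fin v) (Fin d) ℝ) (hKrank : K.rank = d) (hKW : K * Kᵀ = W)
    (Wsq : Matrix (Fin v) (Fin v) ℝ) (hWsq : Wsq.PosSemidef) (hWsqW : Wsq * Wsq = W)
    (Cp : Matrix (Fin v) (Fin v) ℝ) (hCp : IsMPInv C Cp)
    (N : Matrix (Fin v) (Fin v) ℝ) (hN : IsMPInv (Wsq * Cp * Wsq) N) :
    ∀ μ : ℝ, μ ≠ 0 →
      Module.finrank ℝ (LinearMap.ker (((Kᵀ * Cp * K)⁻¹ - μ • 1).mulVecLin)) =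
        Module.finrank ℝ (LinearMap.ker ((N - μ • 1).mulVecLin)) :=
  stmt6_general v d C W hC hcol K hKrank hKW Wsq hWsq hWsqW Cp hCp N hN
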